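/- arXiv:2605.00210 — 8 statements merged into one kernel-verified Lean document; each statement's English description precedes it below -/
import Mathlib

section
/- Let λ ∈ ℝ with |λ| ≥ 1, let d ≥ 1 and let A = J(λ,d) be the Jordan miniblock. Let N̄ ≥ 1, let L be an N̄ × N̄ real matrix, let n : Fin N̄ → ℕ satisfy 1 ≤ n i ≤ d for all i, let S be the associated block-diagonal selection matrix, and let k ∈ ℝ. Then the matrix M := S · ((I_{N̄} − k·L) ⊗ A) · Sᵀ is Schur stable if and only if for every complex eigenvalue μ of S · (L ⊗ I_d) · Sᵀ one has |1 − k·μ| < 1/|λ|. -/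
/-!
Order the selected indices by their position inside the Jordan block. Then
`S ((I - kL) ⊗ J(λ,d)) Sᵀ` is block upper triangular, and its diagonal blocks only see the
diagonal `λ` of `J(λ,d)`. Hence it has the same characteristic polynomial as
`S ((I - kL) ⊗ λI) Sᵀ = λ (I - kP)` with `P = S (L ⊗ I) Sᵀ` (using `S Sᵀ = I`), so its
eigenvalues are exactly the numbers `λ (1 - kμ)` with `μ` an eigenvalue of `P`.
-/

open Matrix Filter
open scoped Kronecker

/-- The `d × d` Jordan miniblock `J(λ,d)`: `λ` on the diagonal, `1` on the
superdiagonal, `0` elsewhere. -/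
def jordanBlock (lam : ℝ) (d : ℕ) : Matrix (Fin d) (Fin d) ℝ :=
  Matrix.of fun i j => if i = j then lam else if (i : ℕ) + 1 = (j : ℕ) then 1 else 0

/-- The block-diagonal selection matrix `S = diag{S_1,…,S_N̄}` where
`S_i = [I_{n i}  0]` has size `n i × d`. -/
def selMatrix (d N : ℕ) (n : Fin N → ℕ) :
    Matrix (Σ i : Fin N, Fin (n i)) (Fin N × Fin d) ℝ :=
  Matrix.of fun p q => if p.1 = q.1 ∧ (p.2 : ℕ) = (q.2 : ℕ) then 1 else 0

/-- A square real matrix is Schur stable if all of its complex eigenvalues have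
modulus strictly less than one. -/
def SchurStable {m : Type} [Fintype m] [DecidableEq m] (M : Matrix m m ℝ) : Prop :=
  ∀ μ ∈ spectrum ℂ (M.map Complex.ofReal), ‖μ‖ < 1

namespace Matrix

variable {ι α β R : Type*}

theorem BlockTriangular.charpoly_eq_of_toSquareBlock_eq [Fintype ι] [DecidableEq ι] [CommRing R]
    [LinearOrder α] {M M' : Matrix ι ι R} {b : ι → α} (hM : M.BlockTriangular b)
    (hM' : M'.BlockTriangular b)
    (hblock : ∀ a, M.toSquareBlock b a = M'.toSquareBlock b a) : M.charpoly = M'.charpoly := by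
  simp only [hM.charpoly, hM'.charpoly, hblock]

theorem IsUpperTriangular.kronecker_submatrix [LinearOrder β] [CommRing R] {T : Matrix β β R}
    (hT : T.IsUpperTriangular) (C : Matrix α α R) (e : ι → α × β) :
    ((C ⊗ₖ T).submatrix e e).BlockTriangular (fun p => (e p).2) := by
  intro p q h
  simp [hT h]

theorem IsUpperTriangular.charpoly_kronecker_submatrix [Fintype ι] [DecidableEq ι]
    [DecidableEq β] [LinearOrder β] [CommRing R] {T : Matrix β β R}
    (hT : T.IsUpperTriangular) (C : Matrix α α R) (e : ι → α × β) :
    ((C ⊗ₖ T).submatrix e e).charpoly = ((C ⊗ₖ diagonal T.diag).submatrix e e).charpoly := by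
  refine (hT.kronecker_submatrix C e).charpoly_eq_of_toSquareBlock_eq
    (IsUpperTriangular.kronecker_submatrix (blockTriangular_diagonal T.diag) C e) fun a => ?_
  ext ⟨p, hp⟩ ⟨q, hq⟩
  simp only [hp, hq, toSquareBlock_def, of_apply, submatrix_apply, kroneckerMap_apply,
    diagonal_apply_eq, diag_apply]

theorem spectrum_map_eq_of_charpoly_eq [Fintype ι] [DecidableEq ι] [CommRing R] {K : Type*}
    [Field K] (f : R →+* K) {A B : Matrix ι ι R} (h : A.charpoly = B.charpoly) :
    spectrum K (A.map f) = spectrum K (B.map f) := by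
  ext z
  simp only [mem_spectrum_iff_isRoot_charpoly, charpoly_map, h]

theorem spectrum_smul_one_sub_smul [Fintype ι] [DecidableEq ι] {K : Type*} [Field K]
    [IsAlgClosed K] (a b : K) (B : Matrix ι ι K) :
    spectrum K (a • 1 - b • B) = (fun μ => a - b * μ) '' spectrum K B := by
  rcases isEmpty_or_nonempty ι with hι | hι
  · simp [spectrum.of_subsingleton]
  · have hB := spectrum.nonempty_of_isAlgClosed_of_finiteDimensional K B
    have := spectrum.map_polynomial_aeval_of_nonempty B
      (Polynomial.C a - Polynomial.C b * Polynomial.X) hB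
    simp only [map_sub, map_mul, Polynomial.aeval_C, Polynomial.aeval_X, Polynomial.eval_sub,
      Polynomial.eval_mul, Polynomial.eval_C, Polynomial.eval_X] at this
    rw [← this, Algebra.algebraMap_eq_smul_one, Algebra.algebraMap_eq_smul_one, smul_mul_assoc,
      one_mul]

theorem map_ofReal_smul_one_sub_smul {ι : Type*} [DecidableEq ι] (a b : ℝ)
    (P : Matrix ι ι ℝ) :
    (a • 1 - b • P).map Complex.ofReal = (a : ℂ) • 1 - (b : ℂ) • P.map Complex.ofReal := by
  rw [Matrix.map_sub _ Complex.ofReal_sub, map_smul' _ _ _ Complex.ofReal_mul,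
    map_smul' _ _ _ Complex.ofReal_mul, Matrix.map_one _ Complex.ofReal_zero Complex.ofReal_one]

end Matrix

section Selection

variable {d N : ℕ} {n : Fin N → ℕ}

def selEmbedding (hnd : ∀ i, n i ≤ d) : (Σ i : Fin N, Fin (n i)) → Fin N × Fin d :=
  fun p => (p.1, Fin.castLE (hnd p.1) p.2)

theorem selEmbedding_injective (hnd : ∀ i, n i ≤ d) : Function.Injective (selEmbedding hnd) := by
  rintro ⟨i, a⟩ ⟨j, b⟩ h
  simp only [selEmbedding, Prod.mk.injEq] at h
  obtain ⟨rfl, h⟩ := h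
  rw [Fin.castLE_injective _ h]

theorem selMatrix_eq (hnd : ∀ i, n i ≤ d) (p : Σ i : Fin N, Fin (n i)) (q : Fin N × Fin d) :
    selMatrix d N n p q = if selEmbedding hnd p = q then 1 else 0 := by
  simp [selMatrix, selEmbedding, Prod.ext_iff, Fin.ext_iff]

theorem selMatrix_mul_mul_transpose (hnd : ∀ i, n i ≤ d)
    (X : Matrix (Fin N × Fin d) (Fin N × Fin d) ℝ) :
    selMatrix d N n * X * (selMatrix d N n)ᵀ =
      X.submatrix (selEmbedding hnd) (selEmbedding hnd) := by
  ext p q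
  simp [Matrix.mul_apply, selMatrix_eq hnd]

theorem selMatrix_mul_transpose (hnd : ∀ i, n i ≤ d) :
    selMatrix d N n * (selMatrix d N n)ᵀ = 1 := by
  have h := selMatrix_mul_mul_transpose hnd 1
  rwa [Matrix.mul_one, submatrix_one _ (selEmbedding_injective hnd)] at h

end Selection

theorem jordanBlock_isUpperTriangular (lam : ℝ) (d : ℕ) :
    (jordanBlock lam d).IsUpperTriangular := by
  intro i j (hji : j < i)
  rw [Fin.lt_def] at hji
  simp only [jordanBlock, of_apply, Fin.ext_iff]
  rw [if_neg (by omega), if_neg (by omega)]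

theorem diagonal_diag_jordanBlock (lam : ℝ) (d : ℕ) :
    diagonal (jordanBlock lam d).diag = lam • 1 := by
  rw [smul_one_eq_diagonal]
  simp [jordanBlock, diag]

theorem stmt0_general (lam : ℝ) (hlam : 1 ≤ |lam|) (d : ℕ)
    (N : ℕ) (L : Matrix (Fin N) (Fin N) ℝ)
    (n : Fin N → ℕ) (hnd : ∀ i, n i ≤ d) (k : ℝ) :
    SchurStable (selMatrix d N n *
        (((1 : Matrix (Fin N) (Fin N) ℝ) - k • L) ⊗ₖ jordanBlock lam d) *
        (selMatrix d N n)ᵀ) ↔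
      ∀ μ ∈ spectrum ℂ ((selMatrix d N n *
          (L ⊗ₖ (1 : Matrix (Fin d) (Fin d) ℝ)) * (selMatrix d N n)ᵀ).map Complex.ofReal),
        ‖1 - (k : ℂ) * μ‖ < 1 / |lam| := by
  set M := selMatrix d N n * (((1 : Matrix (Fin N) (Fin N) ℝ) - k • L) ⊗ₖ jordanBlock lam d) *
    (selMatrix d N n)ᵀ with hM
  set P := selMatrix d N n * (L ⊗ₖ (1 : Matrix (Fin d) (Fin d) ℝ)) * (selMatrix d N n)ᵀ
  have hM_diagonal : M.charpoly = (selMatrix d N n *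
      (((1 : Matrix (Fin N) (Fin N) ℝ) - k • L) ⊗ₖ (lam • (1 : Matrix (Fin d) (Fin d) ℝ))) *
      (selMatrix d N n)ᵀ).charpoly := by
    rw [hM, selMatrix_mul_mul_transpose hnd, selMatrix_mul_mul_transpose hnd,
      (jordanBlock_isUpperTriangular lam d).charpoly_kronecker_submatrix,
      diagonal_diag_jordanBlock]
  have hscalar : selMatrix d N n *
      (((1 : Matrix (Fin N) (Fin N) ℝ) - k • L) ⊗ₖ (lam • (1 : Matrix (Fin d) (Fin d) ℝ))) *
      (selMatrix d N n)ᵀ = lam • 1 - (lam * k) • P := by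
    rw [kronecker_smul, sub_eq_add_neg, ← neg_smul, add_kronecker, smul_kronecker,
      one_kronecker_one, Matrix.mul_smul, Matrix.smul_mul, Matrix.mul_add, Matrix.add_mul,
      Matrix.mul_smul, Matrix.smul_mul, Matrix.mul_one, selMatrix_mul_transpose hnd]
    module
  have hspec : spectrum ℂ (M.map Complex.ofReal) =
      spectrum ℂ ((lam • 1 - (lam * k) • P).map Complex.ofReal) :=
    spectrum_map_eq_of_charpoly_eq Complex.ofRealHom (hM_diagonal.trans (congrArg _ hscalar))
  rw [SchurStable, hspec, map_ofReal_smul_one_sub_smul,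
    spectrum_smul_one_sub_smul, Set.forall_mem_image]
  refine forall₂_congr fun μ _ => ?_
  have hlam_pos : 0 < |lam| := one_pos.trans_le hlam
  rw [Complex.ofReal_mul, mul_assoc, ← mul_one_sub, norm_mul, Complex.norm_real,
    Real.norm_eq_abs, lt_div_iff₀ hlam_pos, mul_comm]

theorem stmt0 (lam : ℝ) (hlam : 1 ≤ |lam|) (d : ℕ) (hd : 1 ≤ d)
    (N : ℕ) (hN : 1 ≤ N) (L : Matrix (Fin N) (Fin N) ℝ)
    (n : Fin N → ℕ) (hn1 : ∀ i, 1 ≤ n i) (hnd : ∀ i, n i ≤ d) (k : ℝ) :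
    SchurStable (selMatrix d N n *
        (((1 : Matrix (Fin N) (Fin N) ℝ) - k • L) ⊗ₖ jordanBlock lam d) *
        (selMatrix d N n)ᵀ) ↔
      ∀ μ ∈ spectrum ℂ ((selMatrix d N n *
          (L ⊗ₖ (1 : Matrix (Fin d) (Fin d) ℝ)) * (selMatrix d N n)ᵀ).map Complex.ofReal),
        ‖1 - (k : ℂ) * μ‖ < 1 / |lam| :=
  stmt0_general lam hlam d N L n hnd k
end

section
/- Let λ ∈ ℝ, let d ≥ 1 and let A = J(λ,d) be the Jordan miniblock. Let N̄ ≥ 1, let L be an N̄ × N̄ real matrix, let n : Fin N̄ → ℕ satisfy 1 ≤ n i ≤ d for all i, let S be the associated block-diagonal selection matrix, and let k ∈ ℝ. Then the spectrum over ℂ of the matrix S · ((I_{N̄} − k·L) ⊗ A) · Sᵀ equals the set { λ·(1 − k·μ) : μ is a complex eigenvalue of S · (L ⊗ I_d) · Sᵀ }. -/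
open Matrix Filter
open scoped Kronecker

/-!
With `b p ∈ Fin d` the position of row `p` of `S` inside its block, the entry `(p, q)` of
`S (M ⊗ A) Sᵀ` is `M p.1 q.1 * A (b p) (b q)`. Since the Jordan block is upper triangular
with constant diagonal `λ`, the matrix `S ((I - kL) ⊗ J) Sᵀ` is block triangular for the
grading `b`, and its diagonal blocks are those of `λ (I - k K)`, where `K = S (L ⊗ I) Sᵀ` is
block diagonal. Hence both matrices have the same characteristic polynomial, and the spectral
mapping theorem for the polynomial `λ (1 - k X)` finishes the proof.
-/

open Polynomial

namespace Matrix

variable {m α K : Type*} [Fintype m] [DecidableEq m] [LinearOrder α] [Field K]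

theorem BlockTriangular.spectrum_eq {A B : Matrix m m K} {b : m → α}
    (hA : A.BlockTriangular b) (hB : B.BlockTriangular b)
    (h : ∀ i j, b i = b j → A i j = B i j) : spectrum K A = spectrum K B := by
  have hcharpoly : A.charpoly = B.charpoly := by
    rw [hA.charpoly, hB.charpoly]
    refine Finset.prod_congr rfl fun a _ => ?_
    congr 1
    ext i j
    exact h i j (i.2.trans j.2.symm)
  ext x
  rw [mem_spectrum_iff_isRoot_charpoly, mem_spectrum_iff_isRoot_charpoly, hcharpoly]

theorem BlockTriangular.aeval {A : Matrix m m K} {b : m → α} (hA : A.BlockTriangular b)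
    (p : K[X]) : (aeval A p).BlockTriangular b := by
  rw [← mem_blockTriangularSubalgebra (R := K)]
  exact Algebra.adjoin_le (Set.singleton_subset_iff.2 hA) (aeval_mem_adjoin_singleton K A)

theorem spectrum_aeval [IsAlgClosed K] (A : Matrix m m K) (p : K[X]) :
    spectrum K (aeval A p) = (eval · p) '' spectrum K A := by
  cases isEmpty_or_nonempty m
  · simp [spectrum.of_subsingleton]
  · exact spectrum.map_polynomial_aeval_of_nonempty A p
      (spectrum.nonempty_of_isAlgClosed_of_finiteDimensional K A)

end Matrix

theorem jordanBlock_apply_self (lam : ℝ) {d : ℕ} (i : Fin d) : jordanBlock lam d i i = lam := by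
  simp [jordanBlock]

theorem jordanBlock_apply_of_lt (lam : ℝ) {d : ℕ} {i j : Fin d} (h : j < i) :
    jordanBlock lam d i j = 0 := by
  have : (j : ℕ) < i := h
  simp only [jordanBlock, of_apply]
  rw [if_neg (by omega), if_neg (by omega)]

section selMatrix

variable {d N : ℕ} {n : Fin N → ℕ} (hnd : ∀ i, n i ≤ d)

def selLevel (p : Σ i : Fin N, Fin (n i)) : Fin d := Fin.castLE (hnd p.1) p.2

theorem sigma_eq_iff_fst_eq_and_selLevel_eq {p q : Σ i : Fin N, Fin (n i)} :
    p = q ↔ p.1 = q.1 ∧ selLevel hnd p = selLevel hnd q := by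
  refine ⟨fun h => h ▸ ⟨rfl, rfl⟩, fun ⟨hfst, hlevel⟩ => ?_⟩
  obtain ⟨i, u⟩ := p
  obtain ⟨j, v⟩ := q
  obtain rfl : i = j := hfst
  simpa [selLevel, Fin.ext_iff] using hlevel

theorem one_apply_of_selLevel_eq {R : Type*} [Zero R] [One R] {p q : Σ i : Fin N, Fin (n i)}
    (h : selLevel hnd p = selLevel hnd q) :
    (1 : Matrix (Σ i : Fin N, Fin (n i)) (Σ i : Fin N, Fin (n i)) R) p q =
      (1 : Matrix (Fin N) (Fin N) R) p.1 q.1 := by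
  simp only [one_apply, sigma_eq_iff_fst_eq_and_selLevel_eq hnd, h, and_true]

theorem selMatrix_apply (p : Σ i : Fin N, Fin (n i)) (u : Fin N × Fin d) :
    selMatrix d N n p u = if (p.1, selLevel hnd p) = u then 1 else 0 := by
  obtain ⟨i, v⟩ := u
  simp [selMatrix, selLevel, Prod.ext_iff, Fin.ext_iff]

theorem selMatrix_mul_kronecker_mul_transpose_apply (M : Matrix (Fin N) (Fin N) ℝ)
    (A : Matrix (Fin d) (Fin d) ℝ) (p q : Σ i : Fin N, Fin (n i)) :
    (selMatrix d N n * (M ⊗ₖ A) * (selMatrix d N n)ᵀ) p q =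
      M p.1 q.1 * A (selLevel hnd p) (selLevel hnd q) := by
  simp [mul_apply, selMatrix_apply hnd, kroneckerMap_apply]

end selMatrix

theorem stmt1_general (lam : ℝ) (d : ℕ)
    (N : ℕ) (L : Matrix (Fin N) (Fin N) ℝ)
    (n : Fin N → ℕ) (hnd : ∀ i, n i ≤ d) (k : ℝ) :
    spectrum ℂ ((selMatrix d N n *
        (((1 : Matrix (Fin N) (Fin N) ℝ) - k • L) ⊗ₖ jordanBlock lam d) *
        (selMatrix d N n)ᵀ).map Complex.ofReal) =
      (fun μ : ℂ => (lam : ℂ) * (1 - (k : ℂ) * μ)) ''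
        spectrum ℂ ((selMatrix d N n *
          (L ⊗ₖ (1 : Matrix (Fin d) (Fin d) ℝ)) * (selMatrix d N n)ᵀ).map Complex.ofReal) := by
  set b := selLevel hnd
  set M := (selMatrix d N n * (((1 : Matrix (Fin N) (Fin N) ℝ) - k • L) ⊗ₖ jordanBlock lam d) *
    (selMatrix d N n)ᵀ).map Complex.ofReal with hM
  set K := (selMatrix d N n * (L ⊗ₖ (1 : Matrix (Fin d) (Fin d) ℝ)) *
    (selMatrix d N n)ᵀ).map Complex.ofReal with hK
  have hM_apply (p q) : M p q = (((1 : Matrix (Fin N) (Fin N) ℝ) - k • L) p.1 q.1 : ℂ) *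
      (jordanBlock lam d (b p) (b q) : ℂ) := by
    rw [hM, map_apply, selMatrix_mul_kronecker_mul_transpose_apply, Complex.ofReal_mul]
  have hK_apply (p q) :
      K p q = (L p.1 q.1 : ℂ) * ((1 : Matrix (Fin d) (Fin d) ℝ) (b p) (b q) : ℂ) := by
    rw [hK, map_apply, selMatrix_mul_kronecker_mul_transpose_apply, Complex.ofReal_mul]
  let P : ℂ[X] := C (lam : ℂ) * (1 - C (k : ℂ) * X)
  have hP : aeval K P = (lam : ℂ) • (1 - (k : ℂ) • K) := by
    simp [P, Algebra.smul_def]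
  have hM_tri : M.BlockTriangular b := fun p q hlt => by
    rw [hM_apply, jordanBlock_apply_of_lt lam hlt, Complex.ofReal_zero, mul_zero]
  have hK_tri : K.BlockTriangular b := fun p q hlt => by
    rw [hK_apply, one_apply_ne hlt.ne', Complex.ofReal_zero, mul_zero]
  have hblocks (p q) (h : b p = b q) : M p q = aeval K P p q := by
    simp only [hP, hM_apply, hK_apply, Matrix.smul_apply, Matrix.sub_apply,
      one_apply_of_selLevel_eq hnd h, h, jordanBlock_apply_self, smul_eq_mul]
    simp only [one_apply]
    split_ifs <;> push_cast <;> ring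
  rw [hM_tri.spectrum_eq (hK_tri.aeval P) hblocks, spectrum_aeval]
  congr 1
  ext μ
  simp [P]

theorem stmt1 (lam : ℝ) (d : ℕ) (hd : 1 ≤ d)
    (N : ℕ) (hN : 1 ≤ N) (L : Matrix (Fin N) (Fin N) ℝ)
    (n : Fin N → ℕ) (hn1 : ∀ i, 1 ≤ n i) (hnd : ∀ i, n i ≤ d) (k : ℝ) :
    spectrum ℂ ((selMatrix d N n *
        (((1 : Matrix (Fin N) (Fin N) ℝ) - k • L) ⊗ₖ jordanBlock lam d) *
        (selMatrix d N n)ᵀ).map Complex.ofReal) =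
      (fun μ : ℂ => (lam : ℂ) * (1 - (k : ℂ) * μ)) ''
        spectrum ℂ ((selMatrix d N n *
          (L ⊗ₖ (1 : Matrix (Fin d) (Fin d) ℝ)) * (selMatrix d N n)ᵀ).map Complex.ofReal) :=
  stmt1_general lam d N L n hnd k
end

section
/- Let d ≥ 1, let N̄ ≥ 1, let L be an N̄ × N̄ real matrix, let n : Fin N̄ → ℕ satisfy 1 ≤ n i ≤ d for all i, and let S be the associated block-diagonal selection matrix. Then the spectrum over ℂ of S · (L ⊗ I_d) · Sᵀ equals the union, over i ∈ {1,…,d}, of the spectra over ℂ of the principal submatrices of L obtained by keeping exactly the rows and columns indexed by { j : n j ≥ i } (the spectrum of an empty matrix being the empty set). -/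
open Matrix Filter
open scoped Kronecker

/-!
`S` selects the rows `(i, a)`, `a < n i`, of the identity on `Fin N × Fin d`, so `S (L ⊗ I) Sᵀ`
is the principal submatrix of `L ⊗ I` on these indices: its `((i, a), (j, b))` entry is `L i j`
if `a = b` and `0` otherwise. Grouping the indices by their level `a + 1` turns it into a
block-diagonal matrix whose block at level `k` is the principal submatrix of `L` on
`{j | k ≤ n j}`. A block-diagonal matrix is invertible iff every block is, so its spectrum is the
union of the spectra of the blocks.
-/

namespace Matrix

section BlockDiagonal

variable {o R : Type*} {m' : o → Type*} [Fintype o] [DecidableEq o] [∀ i, Fintype (m' i)]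

theorem blockDiag'_blockDiagonal'_mul [NonUnitalNonAssocSemiring R]
    (M : ∀ i, Matrix (m' i) (m' i) R) (B : Matrix (Σ i, m' i) (Σ i, m' i) R) (i : o) :
    blockDiag' (blockDiagonal' M * B) i = M i * blockDiag' B i := by
  ext a b
  simp [blockDiag'_apply, mul_apply, Fintype.sum_sigma, blockDiagonal'_apply']

variable [∀ i, DecidableEq (m' i)] [CommRing R]

theorem isUnit_blockDiagonal'_iff (M : ∀ i, Matrix (m' i) (m' i) R) :
    IsUnit (blockDiagonal' M) ↔ ∀ i, IsUnit (M i) := by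
  refine ⟨fun h i => ?_, fun h => (Pi.isUnit_iff.2 h).map (blockDiagonal'RingHom m' R)⟩
  obtain ⟨B, hB⟩ := h.exists_right_inv
  have hBi := congrArg (blockDiag' · i) hB
  simp only [blockDiag'_blockDiagonal'_mul, blockDiag'_one] at hBi
  exact .of_mul_eq_one _ hBi

theorem algebraMap_eq_blockDiagonal' (μ : R) :
    algebraMap R (Matrix (Σ i, m' i) (Σ i, m' i) R) μ =
      blockDiagonal' fun i => algebraMap R (Matrix (m' i) (m' i) R) μ := by
  simp only [algebraMap_eq_diagonal, blockDiagonal'_diagonal]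
  rfl

theorem spectrum_blockDiagonal' (M : ∀ i, Matrix (m' i) (m' i) R) :
    spectrum R (blockDiagonal' M) = ⋃ i, spectrum R (M i) := by
  ext μ
  simp only [Set.mem_iUnion, spectrum.mem_iff, algebraMap_eq_blockDiagonal',
    ← blockDiagonal'_sub, Pi.sub_apply, isUnit_blockDiagonal'_iff, not_forall]

end BlockDiagonal

theorem spectrum_submatrix_equiv {R S m n : Type*} [CommSemiring R] [Ring S] [Algebra R S]
    [Fintype m] [DecidableEq m] [Fintype n] [DecidableEq n] (A : Matrix m m S) (e : n ≃ m) :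
    spectrum R (A.submatrix e e) = spectrum R A :=
  AlgEquiv.spectrum_eq (reindexAlgEquiv R S e.symm) A

theorem one_submatrix_mul_mul_transpose {m n α : Type*} [Fintype m] [DecidableEq m]
    [NonAssocSemiring α] (f : n → m) (A : Matrix m m α) :
    (1 : Matrix m m α).submatrix f id * A * ((1 : Matrix m m α).submatrix f id)ᵀ =
      A.submatrix f f := by
  rw [transpose_submatrix, transpose_one, ← submatrix_id_id A,
    ← submatrix_mul _ _ _ _ _ Function.bijective_id,
    ← submatrix_mul _ _ _ _ _ Function.bijective_id]
  simp

end Matrix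

section Levels

variable {ι : Type*} {d : ℕ} (n : ι → ℕ) (hn : ∀ i, n i ≤ d)

def sigmaFinToProd : (Σ i : ι, Fin (n i)) → ι × Fin d :=
  fun p => (p.1, Fin.castLE (hn p.1) p.2)

def sigmaFinEquivSigmaLevel :
    (Σ i : ι, Fin (n i)) ≃ Σ k : Finset.Icc 1 d, {j : ι // (k : ℕ) ≤ n j} where
  toFun p := ⟨⟨p.2 + 1, Finset.mem_Icc.2 ⟨by omega, by have := hn p.1; omega⟩⟩, ⟨p.1, p.2.isLt⟩⟩
  invFun q := ⟨q.2.1, ⟨q.1 - 1, by have := (Finset.mem_Icc.1 q.1.2).1; have := q.2.2; omega⟩⟩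
  left_inv p := rfl
  right_inv := by
    rintro ⟨⟨k, hk⟩, j⟩
    obtain ⟨k, rfl⟩ : ∃ k', k = k' + 1 := ⟨k - 1, by have := (Finset.mem_Icc.1 hk).1; omega⟩
    rfl

theorem kronecker_one_submatrix_sigmaFinToProd {R : Type*} [MulZeroOneClass R]
    (L : Matrix ι ι R) :
    (L ⊗ₖ (1 : Matrix (Fin d) (Fin d) R)).submatrix (sigmaFinToProd n hn) (sigmaFinToProd n hn) =
      (blockDiagonal' fun k : Finset.Icc 1 d =>
        L.submatrix (Subtype.val : {j : ι // (k : ℕ) ≤ n j} → ι) Subtype.val).submatrix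
        (sigmaFinEquivSigmaLevel n hn) (sigmaFinEquivSigmaLevel n hn) := by
  ext ⟨i, a, ha⟩ ⟨j, b, hb⟩
  by_cases hab : a = b
  · subst hab
    simp [sigmaFinToProd, sigmaFinEquivSigmaLevel]
  · simp [sigmaFinToProd, sigmaFinEquivSigmaLevel, blockDiagonal'_apply, hab, one_apply,
      Fin.ext_iff]

end Levels

theorem selMatrix_eq_one_submatrix (d N : ℕ) (n : Fin N → ℕ) (hn : ∀ i, n i ≤ d) :
    selMatrix d N n =
      (1 : Matrix (Fin N × Fin d) (Fin N × Fin d) ℝ).submatrix (sigmaFinToProd n hn) id := by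
  ext p q
  simp only [selMatrix, sigmaFinToProd, of_apply, submatrix_apply, id, one_apply, Prod.ext_iff,
    Fin.ext_iff, Fin.val_castLE, eq_comm]

theorem stmt2_general (d : ℕ)
    (N : ℕ) (L : Matrix (Fin N) (Fin N) ℝ)
    (n : Fin N → ℕ) (hnd : ∀ i, n i ≤ d) :
    spectrum ℂ ((selMatrix d N n *
        (L ⊗ₖ (1 : Matrix (Fin d) (Fin d) ℝ)) * (selMatrix d N n)ᵀ).map Complex.ofReal) =
      ⋃ i ∈ Finset.Icc 1 d,
        spectrum ℂ ((L.submatrix (fun x : {j : Fin N // i ≤ n j} => (x : Fin N))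
          (fun x : {j : Fin N // i ≤ n j} => (x : Fin N))).map Complex.ofReal) := by
  rw [selMatrix_eq_one_submatrix d N n hnd, one_submatrix_mul_mul_transpose,
    kronecker_one_submatrix_sigmaFinToProd, ← submatrix_map, spectrum_submatrix_equiv,
    blockDiagonal'_map _ _ Complex.ofReal_zero, spectrum_blockDiagonal', Set.iUnion_subtype]

theorem stmt2 (d : ℕ) (hd : 1 ≤ d)
    (N : ℕ) (hN : 1 ≤ N) (L : Matrix (Fin N) (Fin N) ℝ)
    (n : Fin N → ℕ) (hn1 : ∀ i, 1 ≤ n i) (hnd : ∀ i, n i ≤ d) :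
    spectrum ℂ ((selMatrix d N n *
        (L ⊗ₖ (1 : Matrix (Fin d) (Fin d) ℝ)) * (selMatrix d N n)ᵀ).map Complex.ofReal) =
      ⋃ i ∈ Finset.Icc 1 d,
        spectrum ℂ ((L.submatrix (fun x : {j : Fin N // i ≤ n j} => (x : Fin N))
          (fun x : {j : Fin N // i ≤ n j} => (x : Fin N))).map Complex.ofReal) :=
  stmt2_general d N L n hnd
end

section
/- Let λ ∈ ℝ with |λ| ≥ 1, let d ≥ 1 and let A = J(λ,d) be the Jordan miniblock. Let N̄ ≥ 1, let L be an N̄ × N̄ real matrix that is symmetric and positive definite, let n : Fin N̄ → ℕ satisfy 1 ≤ n i ≤ d for all i, let S be the associated block-diagonal selection matrix, and let k ∈ ℝ. Then the matrix M := S · ((I_{N̄} − k·L) ⊗ A) · Sᵀ is Schur stable if and only if the matrix λ·(I_{N̄} − k·L) is Schur stable. -/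
open Matrix Filter
open scoped Kronecker

/-!
Write a vector `v` on the index set of `M = S (B ⊗ J(λ,d)) Sᵀ` as blocks `v_i ∈ ℂ^{n i}` and let
`w_c := (v_{i,c})_i` be its `c`-th grade (zero where `n i ≤ c`). Then
`(M v)_{i,c} = (λB w_c)_i + (B w_{c+1})_i`. An eigenvector of `λB` placed in grade `0` is an
eigenvector of `M`, so `spec(λB) ⊆ spec(M)`. Conversely, the top nonzero grade `w` of an
eigenvector of `M` for `μ` satisfies `(λB w)_i = μ w_i` wherever `w_i ≠ 0`, hence
`w* (λB) w = μ w* w`. For `B = I - kL` symmetric, `λB` is Hermitian, so its numerical range lies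
in the convex hull of its (real) spectrum, and `|μ| < 1` when `λB` is Schur stable.
-/

namespace Matrix

theorem mem_spectrum_iff_exists_mulVec_eq_smul {K m : Type*} [Field K] [Fintype m]
    [DecidableEq m] {A : Matrix m m K} {μ : K} :
    μ ∈ spectrum K A ↔ ∃ v : m → K, v ≠ 0 ∧ A *ᵥ v = μ • v := by
  rw [← spectrum_toLin', ← Module.End.hasEigenvalue_iff_mem_spectrum,
    Module.End.hasEigenvalue_iff, Submodule.ne_bot_iff]
  simp only [Module.End.mem_eigenspace_iff, toLin'_apply]
  exact exists_congr fun v => and_comm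

open scoped ComplexOrder

variable {𝕜 m : Type*} [RCLike 𝕜] [Fintype m] [DecidableEq m] {H : Matrix m m 𝕜}

theorem IsHermitian.posDef_one_sub (hH : H.IsHermitian) (hs : ∀ x ∈ spectrum ℝ H, x < 1) :
    (1 - H).PosDef := by
  have hspec : spectrum 𝕜 (1 - H) ⊆ {a : 𝕜 | 0 < a} := by
    rw [← map_one (algebraMap 𝕜 (Matrix m m 𝕜)), ← spectrum.singleton_sub_eq,
      hH.spectrum_eq_image_range]
    rintro _ ⟨_, rfl, _, ⟨_, ⟨i, rfl⟩, rfl⟩, rfl⟩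
    show (0 : 𝕜) < 1 - (hH.eigenvalues i : 𝕜)
    rw [← RCLike.ofReal_one, ← RCLike.ofReal_sub, RCLike.ofReal_pos, sub_pos]
    exact hs _ (hH.eigenvalues_mem_spectrum_real i)
  refine (posSemidef_iff_isHermitian_and_spectrum_nonneg.mpr
    ⟨isHermitian_one.sub hH, fun a ha => le_of_lt (hspec ha)⟩).posDef_iff_isUnit.mpr ?_
  exact spectrum.isUnit_of_zero_notMem 𝕜 fun h => lt_irrefl _ (hspec h)

theorem IsHermitian.norm_lt_one_of_dotProduct_mulVec_eq (hH : H.IsHermitian)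
    (hs : ∀ μ ∈ spectrum 𝕜 H, ‖μ‖ < 1) {w : m → 𝕜} (hw : w ≠ 0) {μ : 𝕜}
    (hμ : star w ⬝ᵥ (H *ᵥ w) = μ * (star w ⬝ᵥ w)) : ‖μ‖ < 1 := by
  have hs' : ∀ x ∈ spectrum ℝ H, |x| < 1 := fun x hx => by
    simpa using hs _ (spectrum.algebraMap_mem 𝕜 hx)
  have hs_neg : ∀ x ∈ spectrum ℝ (-H), x < 1 := fun x hx => by
    rw [← spectrum.neg_eq] at hx
    linarith [(abs_lt.mp (hs' (-x) hx)).1]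
  -- `1 - H` and `1 + H` are positive definite, so `(1 ∓ μ) w* w > 0`: `μ` is real in `(-1, 1)`.
  have hlt := (hH.posDef_one_sub fun x hx => (abs_lt.mp (hs' x hx)).2).dotProduct_mulVec_pos hw
  have hgt := (hH.neg.posDef_one_sub hs_neg).dotProduct_mulVec_pos hw
  have hww : 0 < star w ⬝ᵥ w := dotProduct_star_self_pos_iff.mpr hw
  rw [sub_mulVec, dotProduct_sub, one_mulVec, hμ, ← one_sub_mul] at hlt
  rw [sub_mulVec, dotProduct_sub, one_mulVec, neg_mulVec, dotProduct_neg, hμ, sub_neg_eq_add,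
    ← one_add_mul] at hgt
  obtain ⟨hre, him⟩ := RCLike.lt_iff_re_im.mp (sub_pos.mp (pos_of_mul_pos_left hlt hww.le))
  obtain ⟨hre', -⟩ :=
    RCLike.lt_iff_re_im.mp (neg_lt_iff_pos_add'.mpr (pos_of_mul_pos_left hgt hww.le))
  simp only [RCLike.one_re, RCLike.one_im, map_neg] at hre him hre'
  nlinarith [norm_nonneg μ, RCLike.norm_sq_eq_def (z := μ)]

end Matrix

section Compression

variable {d N : ℕ} {n : Fin N → ℕ}

def gradeSlice {R : Type*} [Zero R] (v : (Σ i : Fin N, Fin (n i)) → R) (c : ℕ) : Fin N → R :=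
  fun j => if h : c < n j then v ⟨j, ⟨c, h⟩⟩ else 0

theorem gradeSlice_apply_eq_sum {R : Type*} [AddCommMonoid R] (v : (Σ i : Fin N, Fin (n i)) → R)
    (c : ℕ) (j : Fin N) :
    gradeSlice v c j = ∑ b : Fin (n j), if c = b then v ⟨j, b⟩ else 0 := by
  rw [gradeSlice]
  split_ifs with h
  · rw [Finset.sum_eq_single ⟨c, h⟩ (fun b _ hb => if_neg fun hc => hb (Fin.ext hc.symm))
      (by simp)]
    simp
  · exact (Finset.sum_eq_zero fun b _ => if_neg fun hc => h (by omega)).symm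

theorem selMatrix_mul_mul_transpose_apply (hnd : ∀ i, n i ≤ d)
    (X : Matrix (Fin N × Fin d) (Fin N × Fin d) ℝ) (p q : Σ i : Fin N, Fin (n i)) :
    (selMatrix d N n * X * (selMatrix d N n)ᵀ) p q
      = X (p.1, Fin.castLE (hnd p.1) p.2) (q.1, Fin.castLE (hnd q.1) q.2) := by
  have hsel : ∀ r u,
      selMatrix d N n r u = if u = (r.1, Fin.castLE (hnd r.1) r.2) then 1 else 0 := fun r u => by
    simp only [selMatrix, Matrix.of_apply, Prod.ext_iff, Fin.ext_iff, Fin.val_castLE, eq_comm]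
  simp only [Matrix.mul_apply, Matrix.transpose_apply, hsel, mul_ite, mul_one, mul_zero,
    Finset.sum_ite_eq', Finset.mem_univ, if_true, ite_mul, one_mul, zero_mul]

def compressedKroneckerJordan (d : ℕ) (n : Fin N → ℕ) (lam : ℝ) (B : Matrix (Fin N) (Fin N) ℝ) :
    Matrix (Σ i : Fin N, Fin (n i)) (Σ i : Fin N, Fin (n i)) ℝ :=
  selMatrix d N n * (B ⊗ₖ jordanBlock lam d) * (selMatrix d N n)ᵀ

theorem compressedKroneckerJordan_mulVec_apply (hnd : ∀ i, n i ≤ d)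
    (lam : ℝ) (B : Matrix (Fin N) (Fin N) ℝ) (v : (Σ i : Fin N, Fin (n i)) → ℂ)
    (p : Σ i : Fin N, Fin (n i)) :
    ((compressedKroneckerJordan d n lam B).map Complex.ofReal *ᵥ v) p
      = ((lam • B).map Complex.ofReal *ᵥ gradeSlice v p.2) p.1
        + (B.map Complex.ofReal *ᵥ gradeSlice v (p.2 + 1)) p.1 := by
  have hJ : ∀ b : Fin d, jordanBlock lam d (Fin.castLE (hnd p.1) p.2) b =
      (if (p.2 : ℕ) = b then lam else 0) + if (p.2 : ℕ) + 1 = b then 1 else 0 := by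
    intro b
    simp only [jordanBlock, Matrix.of_apply, Fin.ext_iff, Fin.val_castLE]
    split_ifs <;> first | omega | simp
  simp only [compressedKroneckerJordan, mulVec, dotProduct, Matrix.map_apply,
    selMatrix_mul_mul_transpose_apply hnd, kroneckerMap_apply, hJ, Fin.val_castLE,
    Matrix.smul_apply, smul_eq_mul, gradeSlice_apply_eq_sum, Fintype.sum_sigma, Finset.mul_sum,
    ← Finset.sum_add_distrib]
  refine Finset.sum_congr rfl fun j _ => Finset.sum_congr rfl fun b _ => ?_
  split_ifs <;> first | omega | (push_cast; ring)

theorem gradeSlice_ne_zero_and_succ_eq_zero_of_ne_zero {R : Type*} [Zero R]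
    {v : (Σ i : Fin N, Fin (n i)) → R} (hv : v ≠ 0) :
    ∃ a, gradeSlice v a ≠ 0 ∧ gradeSlice v (a + 1) = 0 := by
  classical
  obtain ⟨pm, hpm, hmax⟩ := Finset.exists_max_image {p | v p ≠ 0} (fun p => (p.2 : ℕ))
    (by simpa [Finset.Nonempty, funext_iff] using hv)
  refine ⟨pm.2, fun h => ?_, funext fun j => ?_⟩
  · have hpm_zero := congrFun h pm.1
    simp only [gradeSlice, pm.2.isLt, dif_pos, Fin.eta, Sigma.eta, Pi.zero_apply] at hpm_zero
    exact (Finset.mem_filter.mp hpm).2 hpm_zero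
  · rw [gradeSlice, Pi.zero_apply, dite_eq_right_iff]
    intro h
    by_contra hne
    have := hmax ⟨j, ⟨_, h⟩⟩ (Finset.mem_filter.mpr ⟨Finset.mem_univ _, hne⟩)
    simp at this

variable {lam : ℝ} {B : Matrix (Fin N) (Fin N) ℝ}

theorem mem_spectrum_compressedKroneckerJordan_of_mem_spectrum (hn1 : ∀ i, 1 ≤ n i)
    (hnd : ∀ i, n i ≤ d) {μ : ℂ} (hμ : μ ∈ spectrum ℂ ((lam • B).map Complex.ofReal)) :
    μ ∈ spectrum ℂ ((compressedKroneckerJordan d n lam B).map Complex.ofReal) := by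
  obtain ⟨u, hu0, hu⟩ := mem_spectrum_iff_exists_mulVec_eq_smul.mp hμ
  let v : (Σ i : Fin N, Fin (n i)) → ℂ := fun p => if (p.2 : ℕ) = 0 then u p.1 else 0
  have hslice : ∀ c, gradeSlice v c = if c = 0 then u else 0 := by
    rintro (_ | c) <;> funext j
    · simp [gradeSlice, v, Nat.one_le_iff_ne_zero.mp (hn1 j)]
    · simp [gradeSlice, v]
  refine mem_spectrum_iff_exists_mulVec_eq_smul.mpr ⟨v, fun hv => hu0 ?_, funext fun p => ?_⟩
  · funext j
    simpa [hv, gradeSlice] using (congrFun (hslice 0) j).symm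
  · rw [compressedKroneckerJordan_mulVec_apply hnd, hslice, hslice]
    by_cases hp : (p.2 : ℕ) = 0 <;> simp [v, hp, hu]

theorem exists_dotProduct_mulVec_eq_of_mem_spectrum_compressedKroneckerJordan
    (hnd : ∀ i, n i ≤ d) {μ : ℂ}
    (hμ : μ ∈ spectrum ℂ ((compressedKroneckerJordan d n lam B).map Complex.ofReal)) :
    ∃ w ≠ 0, star w ⬝ᵥ ((lam • B).map Complex.ofReal *ᵥ w) = μ * (star w ⬝ᵥ w) := by
  obtain ⟨v, hv0, hv⟩ := mem_spectrum_iff_exists_mulVec_eq_smul.mp hμ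
  obtain ⟨a, hw0, hnext⟩ := gradeSlice_ne_zero_and_succ_eq_zero_of_ne_zero hv0
  have heig : ∀ i, a < n i → ((lam • B).map Complex.ofReal *ᵥ gradeSlice v a) i
      = μ * gradeSlice v a i := by
    intro i hi
    have := congrFun hv ⟨i, ⟨a, hi⟩⟩
    rw [compressedKroneckerJordan_mulVec_apply hnd, hnext, mulVec_zero] at this
    simpa [gradeSlice, hi] using this
  refine ⟨gradeSlice v a, hw0, ?_⟩
  simp only [dotProduct, Finset.mul_sum]
  refine Finset.sum_congr rfl fun i _ => ?_
  by_cases hi : a < n i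
  · rw [heig i hi]
    ring
  · simp [gradeSlice, hi]

end Compression

theorem stmt5_general (lam : ℝ) (d : ℕ)
    (N : ℕ) (L : Matrix (Fin N) (Fin N) ℝ)
    (hsymm : L.IsSymm)
    (n : Fin N → ℕ) (hn1 : ∀ i, 1 ≤ n i) (hnd : ∀ i, n i ≤ d) (k : ℝ) :
    SchurStable (selMatrix d N n *
        (((1 : Matrix (Fin N) (Fin N) ℝ) - k • L) ⊗ₖ jordanBlock lam d) *
        (selMatrix d N n)ᵀ) ↔
      SchurStable (lam • ((1 : Matrix (Fin N) (Fin N) ℝ) - k • L)) := by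
  have hH : ((lam • (1 - k • L)).map Complex.ofReal).IsHermitian :=
    (isHermitian_iff_isSymm.mpr ((isSymm_one.sub (hsymm.smul k)).smul lam)).map _
      fun _ => by simp
  refine ⟨fun hM μ hμ => hM μ (mem_spectrum_compressedKroneckerJordan_of_mem_spectrum hn1 hnd hμ),
    fun hB μ hμ => ?_⟩
  obtain ⟨w, hw, hwμ⟩ :=
    exists_dotProduct_mulVec_eq_of_mem_spectrum_compressedKroneckerJordan hnd hμ
  exact hH.norm_lt_one_of_dotProduct_mulVec_eq hB hw hwμ

theorem stmt5 (lam : ℝ) (hlam : 1 ≤ |lam|) (d : ℕ) (hd : 1 ≤ d)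
    (N : ℕ) (hN : 1 ≤ N) (L : Matrix (Fin N) (Fin N) ℝ)
    (hsymm : L.IsSymm) (hpd : L.PosDef)
    (n : Fin N → ℕ) (hn1 : ∀ i, 1 ≤ n i) (hnd : ∀ i, n i ≤ d) (k : ℝ) :
    SchurStable (selMatrix d N n *
        (((1 : Matrix (Fin N) (Fin N) ℝ) - k • L) ⊗ₖ jordanBlock lam d) *
        (selMatrix d N n)ᵀ) ↔
      SchurStable (lam • ((1 : Matrix (Fin N) (Fin N) ℝ) - k • L)) :=
  stmt5_general lam d N L hsymm n hn1 hnd k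
end

section
/- Let λ ∈ ℝ with |λ| ≥ 1, let N̄ ≥ 1, let L be an N̄ × N̄ real matrix that is symmetric and positive definite, and let μ_m and μ_M denote respectively the smallest and largest (real) eigenvalue of L, so that 0 < μ_m ≤ μ_M. Then for k ∈ ℝ, the matrix λ·(I_{N̄} − k·L) is Schur stable if and only if (1/μ_m)·(1 − 1/|λ|) < k < (1/μ_M)·(1 + 1/|λ|). -/
open Matrix Filter
open scoped Kronecker

/-
As `L` is symmetric, the complex spectrum of `λ (I - k L)` is the real set
`{λ (1 - k t) : t ∈ σ(L)}`, so Schur stability says `1 - 1/|λ| < k t < 1 + 1/|λ|` for every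
eigenvalue `t` of `L`. Since `1/|λ| ≤ 1` and `t > 0`, this forces `k > 0`; then `t ↦ k t` is
increasing and only the extreme eigenvalues `μ_m` and `μ_M` matter.
-/

lemma Matrix.PosDef.pos_of_mem_spectrum {n : Type*} [Fintype n] [DecidableEq n]
    {A : Matrix n n ℝ} (hA : A.PosDef) {t : ℝ} (ht : t ∈ spectrum ℝ A) : 0 < t := by
  obtain ⟨i, rfl⟩ := hA.isHermitian.spectrum_real_eq_range_eigenvalues ▸ ht
  exact hA.eigenvalues_pos i

lemma Matrix.ofReal_mem_spectrum_map_ofReal_iff {n : Type*} [Fintype n] [DecidableEq n]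
    (A : Matrix n n ℝ) (t : ℝ) :
    (t : ℂ) ∈ spectrum ℂ (A.map Complex.ofReal) ↔ t ∈ spectrum ℝ A := by
  rw [mem_spectrum_iff_isRoot_charpoly, mem_spectrum_iff_isRoot_charpoly,
    ← Polynomial.isRoot_map_iff Complex.ofRealHom.injective, ← charpoly_map]
  rfl

lemma Matrix.IsHermitian.spectrum_map_ofReal {n : Type*} [Fintype n] [DecidableEq n]
    {A : Matrix n n ℝ} (hA : A.IsHermitian) :
    spectrum ℂ (A.map Complex.ofReal) = Complex.ofReal '' spectrum ℝ A := by
  have hA' : (A.map Complex.ofReal).IsHermitian :=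
    hA.map _ fun x => (Complex.conj_ofReal x).symm
  ext z
  constructor
  · intro hz
    obtain ⟨_, ⟨i, rfl⟩, rfl⟩ := hA'.spectrum_eq_image_range ▸ hz
    exact ⟨_, (ofReal_mem_spectrum_map_ofReal_iff A _).mp hz, rfl⟩
  · rintro ⟨t, ht, rfl⟩
    exact (ofReal_mem_spectrum_map_ofReal_iff A t).mpr ht

lemma spectrum_smul_one_sub_smul {𝕜 A : Type*} [Field 𝕜] [Ring A] [Algebra 𝕜 A] [Nontrivial A]
    (c k : 𝕜) {a : A} (ha : (spectrum 𝕜 a).Nonempty) :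
    spectrum 𝕜 (c • (1 - k • a)) = (fun t => c * (1 - k * t)) '' spectrum 𝕜 a := by
  have hsub : spectrum 𝕜 (1 - k • a) = (fun t => 1 - k * t) '' spectrum 𝕜 a := by
    rw [← map_one (algebraMap 𝕜 A), ← spectrum.singleton_sub_eq, spectrum.smul_eq_smul k a ha,
      Set.singleton_sub, ← Set.image_smul, Set.image_image]
    rfl
  rw [spectrum.smul_eq_smul c _ (hsub ▸ ha.image _), hsub, ← Set.image_smul, Set.image_image]
  rfl

lemma schurStable_smul_one_sub_smul_iff {n : Type} [Fintype n] [DecidableEq n] [Nonempty n]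
    {A : Matrix n n ℝ} (hA : A.IsHermitian) (c k : ℝ) :
    SchurStable (c • (1 - k • A)) ↔ ∀ t ∈ spectrum ℝ A, |c * (1 - k * t)| < 1 := by
  have hmap : (c • (1 - k • A)).map Complex.ofReal =
      (c : ℂ) • (1 - (k : ℂ) • A.map Complex.ofReal) := by
    ext i j
    simp [Matrix.one_apply, apply_ite Complex.ofReal]
  have hne : (spectrum ℂ (A.map Complex.ofReal)).Nonempty :=
    hA.spectrum_map_ofReal ▸ (hA.spectrum_real_eq_range_eigenvalues ▸ Set.range_nonempty _).image _
  unfold SchurStable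
  rw [hmap, spectrum_smul_one_sub_smul _ _ hne, hA.spectrum_map_ofReal, Set.image_image,
    Set.forall_mem_image]
  refine forall₂_congr fun t _ => ?_
  rw [← Real.norm_eq_abs, ← Complex.norm_real]
  simp

lemma forall_abs_one_sub_mul_lt_iff {S : Set ℝ} {a b c k : ℝ} (ha : IsLeast S a)
    (hb : IsGreatest S b) (ha0 : 0 < a) (hc : c ≤ 1) :
    (∀ t ∈ S, |1 - k * t| < c) ↔ 1 / a * (1 - c) < k ∧ k < 1 / b * (1 + c) := by
  have hb0 : 0 < b := ha0.trans_le (hb.2 ha.1)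
  rw [one_div, inv_mul_lt_iff₀ ha0, one_div, inv_mul_eq_div, lt_div_iff₀ hb0]
  constructor
  · intro h
    have ha' := abs_lt.mp (h a ha.1)
    have hb' := abs_lt.mp (h b hb.1)
    constructor <;> linarith
  · rintro ⟨hka, hkb⟩ t ht
    have hk : 0 < k := pos_of_mul_pos_right (by linarith) ha0.le
    have hat := mul_le_mul_of_nonneg_left (ha.2 ht) hk.le
    have htb := mul_le_mul_of_nonneg_left (hb.2 ht) hk.le
    rw [abs_lt]
    constructor <;> linarith

theorem stmt6_general (lam : ℝ) (hlam : 1 ≤ |lam|)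
    (N : ℕ) (hN : 1 ≤ N) (L : Matrix (Fin N) (Fin N) ℝ)
    (hpd : L.PosDef)
    (μm μM : ℝ) (hμm : IsLeast (spectrum ℝ L) μm) (hμM : IsGreatest (spectrum ℝ L) μM)
    (k : ℝ) :
    SchurStable (lam • ((1 : Matrix (Fin N) (Fin N) ℝ) - k • L)) ↔
      (1 / μm) * (1 - 1 / |lam|) < k ∧ k < (1 / μM) * (1 + 1 / |lam|) := by
  have hlam0 : 0 < |lam| := one_pos.trans_le hlam
  have : Nonempty (Fin N) := ⟨⟨0, hN⟩⟩
  rw [schurStable_smul_one_sub_smul_iff hpd.isHermitian, ← forall_abs_one_sub_mul_lt_iff hμm hμM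
    (hpd.pos_of_mem_spectrum hμm.1) (div_le_one_of_le₀ hlam hlam0.le)]
  refine forall₂_congr fun t _ => ?_
  rw [abs_mul, lt_div_iff₀' hlam0]

theorem stmt6 (lam : ℝ) (hlam : 1 ≤ |lam|)
    (N : ℕ) (hN : 1 ≤ N) (L : Matrix (Fin N) (Fin N) ℝ)
    (hsymm : L.IsSymm) (hpd : L.PosDef)
    (μm μM : ℝ) (hμm : IsLeast (spectrum ℝ L) μm) (hμM : IsGreatest (spectrum ℝ L) μM)
    (k : ℝ) :
    SchurStable (lam • ((1 : Matrix (Fin N) (Fin N) ℝ) - k • L)) ↔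
      (1 / μm) * (1 - 1 / |lam|) < k ∧ k < (1 / μM) * (1 + 1 / |lam|) :=
  stmt6_general lam hlam N hN L hpd μm μM hμm hμM k
end

section
/- Let m ≥ 1, let d : Fin m → ℕ with d j ≥ 1 for all j, let λ : Fin m → ℝ, and let A be the n × n real matrix (with n = Σ_j d j, indexed by the sigma type Σ j, Fin (d j)) given as the block-diagonal matrix whose j-th diagonal block is the Jordan miniblock J(λ j, d j). Let p ≥ 1 and let C be a p × n real matrix. Fix j₀ ∈ Fin m and suppose that the (n + p) × n real matrix obtained by stacking A − (λ j₀)·I_n on top of C has rank n. Then the column of C indexed by ⟨j₀, 0⟩ (the first index of the j₀-th miniblock) is nonzero, i.e., there exists a row index i with C i ⟨j₀,0⟩ ≠ 0. -/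
open Matrix Filter
open scoped Kronecker

/-! The first column of `J(λ,d) - λ I` vanishes, hence so does the column of `A - λ_{j₀} I` at
`⟨j₀, 0⟩`. A matrix of full column rank has no zero column, so in the stacked matrix
`[A - λ_{j₀} I ; C]` that column must be nonzero in its `C` part. -/

namespace Matrix

variable {R m n : Type*}

theorem linearIndependent_col_of_rank_eq_card [Field R] [Fintype n] {A : Matrix m n R}
    (h : A.rank = Fintype.card n) : LinearIndependent R A.col := by
  rw [linearIndependent_iff_card_eq_finrank_span, Set.finrank, ← rank_eq_finrank_span_cols, h]

theorem exists_ne_zero_of_rank_fromRows_eq_card [Field R] [Fintype n] {p : Type*}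
    {A : Matrix m n R} {B : Matrix p n R} (h : (fromRows A B).rank = Fintype.card n) {j : n}
    (hA : ∀ i, A i j = 0) : ∃ i, B i j ≠ 0 := by
  by_contra! hB
  refine (linearIndependent_col_of_rank_eq_card h).ne_zero j (funext ?_)
  rintro (i | i)
  · exact hA i
  · exact hB i

theorem blockDiagonal'_apply_of_col_eq_zero [Zero R] {o : Type*} [DecidableEq o]
    {m' n' : o → Type*} {M : ∀ k, Matrix (m' k) (n' k) R} {k : o} {b : n' k}
    (hM : ∀ a, M k a b = 0) (i : Σ k, m' k) : blockDiagonal' M i ⟨k, b⟩ = 0 := by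
  obtain ⟨k', a⟩ := i
  by_cases h : k' = k
  · subst h
    simpa using hM a
  · exact blockDiagonal'_apply_ne M a b h

end Matrix

open Matrix

theorem jordanBlock_sub_smul_one_apply_zero (lam : ℝ) {d : ℕ} (hd : 0 < d) (a : Fin d) :
    (jordanBlock lam d - lam • (1 : Matrix (Fin d) (Fin d) ℝ)) a ⟨0, hd⟩ = 0 := by
  by_cases ha : a = ⟨0, hd⟩
  · simp [jordanBlock, ha]
  · simp [jordanBlock, ha, one_apply_ne ha]

theorem stmt8_general (m : ℕ) (d : Fin m → ℕ) (hd : ∀ j, 1 ≤ d j)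
    (lam : Fin m → ℝ)
    (p : ℕ)
    (C : Matrix (Fin p) (Σ j : Fin m, Fin (d j)) ℝ)
    (j₀ : Fin m)
    (hrank : (Matrix.fromRows
        (Matrix.blockDiagonal' (fun j => jordanBlock (lam j) (d j)) -
          lam j₀ • (1 : Matrix (Σ j : Fin m, Fin (d j)) (Σ j : Fin m, Fin (d j)) ℝ))
        C).rank = Fintype.card (Σ j : Fin m, Fin (d j))) :
    ∃ i : Fin p, C i ⟨j₀, ⟨0, hd j₀⟩⟩ ≠ 0 := by
  refine exists_ne_zero_of_rank_fromRows_eq_card hrank fun i => ?_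
  rw [← blockDiagonal'_one, ← blockDiagonal'_smul, ← blockDiagonal'_sub]
  exact blockDiagonal'_apply_of_col_eq_zero
    (jordanBlock_sub_smul_one_apply_zero (lam j₀) (hd j₀)) i

theorem stmt8 (m : ℕ) (hm : 1 ≤ m) (d : Fin m → ℕ) (hd : ∀ j, 1 ≤ d j)
    (lam : Fin m → ℝ)
    (p : ℕ) (hp : 1 ≤ p)
    (C : Matrix (Fin p) (Σ j : Fin m, Fin (d j)) ℝ)
    (j₀ : Fin m)
    (hrank : (Matrix.fromRows
        (Matrix.blockDiagonal' (fun j => jordanBlock (lam j) (d j)) -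
          lam j₀ • (1 : Matrix (Σ j : Fin m, Fin (d j)) (Σ j : Fin m, Fin (d j)) ℝ))
        C).rank = Fintype.card (Σ j : Fin m, Fin (d j))) :
    ∃ i : Fin p, C i ⟨j₀, ⟨0, hd j₀⟩⟩ ≠ 0 :=
  stmt8_general m d hd lam p C j₀ hrank
end

section
/- Let N ≥ 2 and let W be an N × N real matrix with W symmetric, all entries nonnegative, and zero diagonal. Let G be the simple graph on Fin N in which distinct vertices i and j are adjacent exactly when W i j > 0, and assume G is connected. Let L := D − W, where D is the diagonal matrix with D i i = Σ_j W i j (the weighted Laplacian). Then for every nonempty proper subset T of the vertex set, the principal submatrix of L obtained by keeping the rows and columns indexed by T is positive definite (in particular all of its eigenvalues are real and strictly positive). -/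
/-
The quadratic form of the weighted Laplacian is `vᵀ L v = ½ ∑ᵢⱼ Wᵢⱼ (vᵢ - vⱼ)²`, so `L` is positive
semidefinite and `vᵀ L v = 0` forces `v` to be constant along every edge, hence constant on the
connected graph `G`. For `x` indexed by `T`, the quadratic form of the principal submatrix at `x` is
that of `L` at the extension of `x` by zero; if it vanishes, this extension is constant and vanishes
at a vertex outside `T`, so `x = 0`.
-/

open Matrix Filter
open scoped Kronecker

open Finset

theorem SimpleGraph.Reachable.eq_of_forall_adj {V α : Type*} {G : SimpleGraph V} {f : V → α}
    (hf : ∀ i j, G.Adj i j → f i = f j) {i j : V} (hij : G.Reachable i j) : f i = f j := by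
  obtain ⟨w⟩ := hij
  induction w with
  | nil => rfl
  | cons hadj _ ih => exact (hf _ _ hadj).trans ih

namespace Matrix

variable {m n R : Type*} [Fintype m] [Fintype n]

theorem dotProduct_submatrix_mulVec [NonUnitalNonAssocSemiring R] (M : Matrix n n R)
    {e : m → n} (he : Function.Injective e) (x y : m → R) :
    y ⬝ᵥ (M.submatrix e e *ᵥ x) = e.extend y 0 ⬝ᵥ (M *ᵥ e.extend x 0) := by
  have hmulVec (i : m) : (M.submatrix e e *ᵥ x) i = (M *ᵥ e.extend x 0) (e i) := by
    refine Fintype.sum_of_injective e he _ _ (fun k hk => ?_) (fun k => ?_)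
    · simp [Function.extend_apply' _ _ _ hk]
    · simp [he.extend_apply]
  refine Fintype.sum_of_injective e he _ _ (fun k hk => ?_) (fun k => ?_)
  · simp [Function.extend_apply' _ _ _ hk]
  · simp [he.extend_apply, hmulVec]

theorem PosSemidef.posDef_submatrix [CommRing R] [PartialOrder R] [StarRing R] [TrivialStar R]
    {M : Matrix n n R} (hM : M.PosSemidef) {e : m → n} (he : Function.Injective e)
    (hker : ∀ v : n → R, v ⬝ᵥ (M *ᵥ v) = 0 → (∀ i ∉ Set.range e, v i = 0) → v = 0) :
    (M.submatrix e e).PosDef := by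
  refine .of_dotProduct_mulVec_pos (hM.isHermitian.submatrix e) fun x hx => ?_
  rw [star_trivial, dotProduct_submatrix_mulVec M he]
  have hnonneg := hM.dotProduct_mulVec_nonneg (e.extend x 0)
  rw [star_trivial] at hnonneg
  refine hnonneg.lt_of_ne' fun h0 => hx ?_
  have hext := hker _ h0 fun i hi => Function.extend_apply' _ _ _ hi
  funext k
  simpa [he.extend_apply] using congrFun hext (e k)

end Matrix

section WeightedLaplacian

variable {ι R : Type*} [Fintype ι] [DecidableEq ι]

def weightedLaplacian [Ring R] (W : Matrix ι ι R) : Matrix ι ι R :=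
  diagonal (fun i => ∑ j, W i j) - W

theorem isSymm_weightedLaplacian [Ring R] {W : Matrix ι ι R} (hW : W.IsSymm) :
    (weightedLaplacian W).IsSymm :=
  (isSymm_diagonal _).sub hW

theorem weightedLaplacian_mulVec_apply [CommRing R] (W : Matrix ι ι R) (v : ι → R) (i : ι) :
    (weightedLaplacian W *ᵥ v) i = ∑ j, W i j * (v i - v j) := by
  simp only [weightedLaplacian, sub_mulVec, Pi.sub_apply, mulVec_diagonal]
  simp [mulVec, dotProduct, mul_sub, sum_mul]

theorem two_mul_dotProduct_weightedLaplacian_mulVec [CommRing R] {W : Matrix ι ι R}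
    (hW : W.IsSymm) (v : ι → R) :
    2 * (v ⬝ᵥ (weightedLaplacian W *ᵥ v)) = ∑ i, ∑ j, W i j * (v i - v j) ^ 2 := by
  have hform : v ⬝ᵥ (weightedLaplacian W *ᵥ v) = ∑ i, ∑ j, W i j * (v i * (v i - v j)) := by
    simp only [dotProduct, weightedLaplacian_mulVec_apply, mul_sum]
    exact sum_congr rfl fun i _ => sum_congr rfl fun j _ => by ring
  have hswap : ∑ i, ∑ j, W i j * (v i * (v i - v j)) = ∑ i, ∑ j, W i j * (v j * (v j - v i)) := by
    rw [sum_comm]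
    simp only [hW.apply]
  calc 2 * (v ⬝ᵥ (weightedLaplacian W *ᵥ v))
      = ∑ i, ∑ j, W i j * (v i * (v i - v j)) + ∑ i, ∑ j, W i j * (v j * (v j - v i)) := by
        rw [two_mul, ← hswap, hform]
    _ = ∑ i, ∑ j, W i j * (v i - v j) ^ 2 := by
        simp only [← sum_add_distrib]
        exact sum_congr rfl fun i _ => sum_congr rfl fun j _ => by ring

variable [CommRing R] [LinearOrder R] [IsStrictOrderedRing R] {W : Matrix ι ι R}

theorem posSemidef_weightedLaplacian [StarRing R] [TrivialStar R] (hW : W.IsSymm)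
    (hW₀ : ∀ i j, 0 ≤ W i j) : (weightedLaplacian W).PosSemidef := by
  refine .of_dotProduct_mulVec_nonneg (isHermitian_iff_isSymm.2 (isSymm_weightedLaplacian hW))
    fun v => ?_
  rw [star_trivial, ← mul_nonneg_iff_of_pos_left two_pos,
    two_mul_dotProduct_weightedLaplacian_mulVec hW]
  exact sum_nonneg fun i _ => sum_nonneg fun j _ => mul_nonneg (hW₀ i j) (sq_nonneg _)

theorem eq_of_dotProduct_weightedLaplacian_mulVec_eq_zero (hW : W.IsSymm) (hW₀ : ∀ i j, 0 ≤ W i j)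
    {v : ι → R} (hv : v ⬝ᵥ (weightedLaplacian W *ᵥ v) = 0) {i j : ι} (hij : 0 < W i j) :
    v i = v j := by
  have hterm_nonneg (i j : ι) : 0 ≤ W i j * (v i - v j) ^ 2 := mul_nonneg (hW₀ i j) (sq_nonneg _)
  have hsum := two_mul_dotProduct_weightedLaplacian_mulVec hW v
  rw [hv, mul_zero, eq_comm, Fintype.sum_eq_zero_iff_of_nonneg
    fun i => sum_nonneg fun j _ => hterm_nonneg i j] at hsum
  have hrow : ∑ j, W i j * (v i - v j) ^ 2 = 0 := congrFun hsum i
  rw [Fintype.sum_eq_zero_iff_of_nonneg (hterm_nonneg i)] at hrow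
  have hterm : W i j * (v i - v j) ^ 2 = 0 := congrFun hrow j
  rw [mul_eq_zero, or_iff_right hij.ne', pow_eq_zero_iff two_ne_zero, sub_eq_zero] at hterm
  exact hterm

end WeightedLaplacian

theorem stmt9_general (N : ℕ) (W : Matrix (Fin N) (Fin N) ℝ)
    (hsymm : W.IsSymm) (hnonneg : ∀ i j, 0 ≤ W i j)
    (G : SimpleGraph (Fin N)) (hG : ∀ i j, G.Adj i j ↔ i ≠ j ∧ 0 < W i j)
    (hconn : G.Connected)
    (L : Matrix (Fin N) (Fin N) ℝ)
    (hL : L = Matrix.diagonal (fun i => ∑ j, W i j) - W)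
    (T : Finset (Fin N)) (hT' : T ≠ Finset.univ) :
    (L.submatrix (fun x : {j // j ∈ T} => (x : Fin N))
      (fun x : {j // j ∈ T} => (x : Fin N))).PosDef := by
  obtain ⟨k, hk⟩ : ∃ k, k ∉ T := by simpa [eq_univ_iff_forall] using hT'
  subst hL
  refine (posSemidef_weightedLaplacian hsymm hnonneg).posDef_submatrix Subtype.val_injective
    fun v hv hvT => ?_
  have hconst (i : Fin N) : v i = v k := (hconn.preconnected i k).eq_of_forall_adj fun i j hij =>
    eq_of_dotProduct_weightedLaplacian_mulVec_eq_zero hsymm hnonneg hv ((hG i j).1 hij).2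
  funext i
  rw [hconst i]
  exact hvT k (by simpa using hk)

theorem stmt9 (N : ℕ) (hN : 2 ≤ N) (W : Matrix (Fin N) (Fin N) ℝ)
    (hsymm : W.IsSymm) (hnonneg : ∀ i j, 0 ≤ W i j) (hdiag : ∀ i, W i i = 0)
    (G : SimpleGraph (Fin N)) (hG : ∀ i j, G.Adj i j ↔ i ≠ j ∧ 0 < W i j)
    (hconn : G.Connected)
    (L : Matrix (Fin N) (Fin N) ℝ)
    (hL : L = Matrix.diagonal (fun i => ∑ j, W i j) - W)
    (T : Finset (Fin N)) (hT : T.Nonempty) (hT' : T ≠ Finset.univ) :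
    (L.submatrix (fun x : {j // j ∈ T} => (x : Fin N))
      (fun x : {j // j ∈ T} => (x : Fin N))).PosDef :=
  stmt9_general N W hsymm hnonneg G hG hconn L hL T hT'
end

section
/- Let λ ∈ ℝ with |λ| ≥ 1, let d ≥ 1 and let A = J(λ,d) be the Jordan miniblock. Let N̄ ≥ 1, let L be an N̄ × N̄ real matrix and let k ∈ ℝ, and set Φ := (I_{N̄} − k·L) ⊗ A. Then the discrete-time linear system e(t+1) = Φ · e(t) is globally asymptotically stable — i.e., for every initial vector e(0) ∈ ℝ^{N̄·d} the sequence Φᵗ · e(0) tends to the zero vector as t → ∞ — if and only if for every complex eigenvalue μ of L one has |1 − k·μ| < 1/|λ|. -/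
open Matrix Filter
open scoped Kronecker

/-!
Over `ℂ`, the powers of a square matrix tend to zero iff its spectrum lies in the open unit disc:
Gelfand's formula gives one direction, an eigenvector the other. A real matrix inherits this
criterion, since its powers converge iff those of its complexification do.

Ordering the indices by the Jordan coordinate, `z - M ⊗ J(λ,d)` is block upper triangular with
every diagonal block equal to `z - λ M`, so `σ(Φ) = λ • σ(I - k L)`, and by spectral mapping
`σ(I - k L) = {1 - k μ | μ ∈ σ(L)}`.
-/

open scoped ENNReal Topology

theorem spectrum.tendsto_pow_nhds_zero_of_spectralRadius_lt_one {A : Type*} [NormedRing A]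
    [NormedAlgebra ℂ A] [CompleteSpace A] {a : A} (ha : spectralRadius ℂ a < 1) :
    Tendsto (a ^ ·) atTop (𝓝 0) := by
  obtain ⟨r, hρr, hr1⟩ := ENNReal.lt_iff_exists_nnreal_btwn.mp ha
  have hr1 : r < 1 := mod_cast hr1
  have hev : ∀ᶠ t : ℕ in atTop, (‖a ^ t‖₊ : ℝ≥0∞) ^ (1 / (t : ℝ)) < r :=
    (pow_nnnorm_pow_one_div_tendsto_nhds_spectralRadius a).eventually (gt_mem_nhds hρr)
  refine squeeze_zero_norm' ?_ (tendsto_pow_atTop_nhds_zero_of_lt_one r.2 hr1)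
  filter_upwards [hev, eventually_gt_atTop 0] with t ht ht0
  have := ENNReal.rpow_lt_rpow ht (by positivity : (0 : ℝ) < t)
  rw [← ENNReal.rpow_mul, one_div_mul_cancel (by positivity), ENNReal.rpow_one,
    ENNReal.rpow_natCast, ← ENNReal.coe_pow, ENNReal.coe_lt_coe] at this
  exact_mod_cast this.le

open Polynomial in
theorem spectrum.one_sub_smul_eq_image {𝕜 A : Type*} [Field 𝕜] [IsAlgClosed 𝕜] [Ring A]
    [Algebra 𝕜 A] [Nontrivial A] [FiniteDimensional 𝕜 A] (a : A) (c : 𝕜) :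
    spectrum 𝕜 (1 - c • a) = (fun z => 1 - c * z) '' spectrum 𝕜 a := by
  have h : 1 - c • a = aeval a (C 1 - C c * X) := by simp [Algebra.smul_def]
  rw [h, spectrum.map_polynomial_aeval_of_nonempty a _
    (spectrum.nonempty_of_isAlgClosed_of_finiteDimensional 𝕜 a)]
  simp

namespace Matrix

theorem tendsto_map_ofReal_nhds_zero_iff {ι m n : Type*} {M : ι → Matrix m n ℝ} {l : Filter ι} :
    Tendsto (fun i => (M i).map Complex.ofReal) l (𝓝 0) ↔ Tendsto M l (𝓝 0) := by
  refine ⟨fun h => ?_, fun h => ?_⟩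
  · simpa [Function.comp_def] using
      ((continuous_id.matrix_map Complex.continuous_re).tendsto 0).comp h
  · simpa [Function.comp_def] using
      ((continuous_id.matrix_map Complex.continuous_ofReal).tendsto 0).comp h

section

variable {n : Type*} [Fintype n] [DecidableEq n]

theorem tendsto_mulVec_nhds_zero_iff {ι m R : Type*} [Semiring R] [TopologicalSpace R]
    [IsTopologicalSemiring R] {M : ι → Matrix m n R} {l : Filter ι} :
    (∀ e : n → R, Tendsto (fun i => M i *ᵥ e) l (𝓝 0)) ↔ Tendsto M l (𝓝 0) := by
  refine ⟨fun h => ?_, fun h e => ?_⟩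
  · refine tendsto_pi_nhds.mpr fun i => tendsto_pi_nhds.mpr fun j => ?_
    simpa [mulVec_single_one] using tendsto_pi_nhds.mp (h (Pi.single j 1)) i
  · simpa [Function.comp_def] using
      ((continuous_id.matrix_mulVec continuous_const).tendsto 0).comp h

theorem tendsto_pow_nhds_zero_iff_forall_norm_lt_one (A : Matrix n n ℂ) :
    Tendsto (A ^ ·) atTop (𝓝 0) ↔ ∀ z ∈ spectrum ℂ A, ‖z‖ < 1 := by
  constructor
  · intro h z hz
    rw [← spectrum_toLin', ← Module.End.hasEigenvalue_iff_mem_spectrum] at hz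
    obtain ⟨v, hv⟩ := hz.exists_hasEigenvector
    have hpow (t : ℕ) : (A ^ t) *ᵥ v = z ^ t • v := by
      simpa [← toLin'_pow] using hv.pow_apply t
    have hzv : Tendsto (fun t : ℕ => ‖z‖ ^ t * ‖v‖) atTop (𝓝 0) := by
      simpa [hpow, norm_smul] using (tendsto_mulVec_nhds_zero_iff.mpr h v).norm
    have hz : Tendsto (fun t : ℕ => ‖z‖ ^ t) atTop (𝓝 0) := by
      simpa [norm_ne_zero_iff.mpr hv.2] using hzv.div_const ‖v‖
    simpa using tendsto_pow_atTop_nhds_zero_iff.mp hz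
  · intro h
    -- Matrices carry no global norm; any Banach algebra norm serves Gelfand's formula.
    let := Matrix.linftyOpNormedRing (n := n) (α := ℂ)
    let := Matrix.linftyOpNormedAlgebra (n := n) (R := ℂ) (α := ℂ)
    have : CompleteSpace (Matrix n n ℂ) := FiniteDimensional.complete ℂ _
    cases isEmpty_or_nonempty n
    · exact tendsto_const_nhds.congr fun _ => Subsingleton.elim _ _
    · exact spectrum.tendsto_pow_nhds_zero_of_spectralRadius_lt_one
        (spectrum.spectralRadius_lt_of_forall_lt A fun z hz => mod_cast h z hz)

theorem spectrum_kronecker_of_isUpperTriangular {K m : Type*} [Field K] [Fintype m]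
    [DecidableEq m] [LinearOrder m] (A : Matrix n n K) {B : Matrix m m K}
    (hB : B.IsUpperTriangular) :
    spectrum K (A ⊗ₖ B) = ⋃ k, spectrum K (B k k • A) := by
  ext z
  have hblock : (algebraMap K _ z - A ⊗ₖ B).BlockTriangular Prod.snd := by
    intro p q hqp
    have hpq : p ≠ q := fun h => hqp.ne (congrArg Prod.snd h).symm
    simp [algebraMap_matrix_apply, hpq, hB hqp]
  have hdiag (k : m) : ((algebraMap K _ z - A ⊗ₖ B).toSquareBlock Prod.snd k).det =
      (algebraMap K _ z - B k k • A).det := by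
    let e : n ≃ {p : n × m // p.2 = k} :=
      { toFun i := ⟨(i, k), rfl⟩
        invFun p := p.1.1
        left_inv _ := rfl
        right_inv := fun ⟨⟨_, _⟩, h⟩ => by subst h; rfl }
    rw [← det_submatrix_equiv_self e]
    congr 1
    ext i j
    simp [e, toSquareBlock_def, algebraMap_matrix_apply, mul_comm]
  simp only [Set.mem_iUnion, spectrum.mem_iff, isUnit_iff_isUnit_det, isUnit_iff_ne_zero, not_not,
    hblock.det_fintype, Finset.prod_eq_zero_iff, Finset.mem_univ, true_and, hdiag]

end

theorem tendsto_pow_mulVec_nhds_zero_iff_schurStable {n : Type} [Fintype n] [DecidableEq n]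
    (A : Matrix n n ℝ) :
    (∀ e : n → ℝ, Tendsto (fun t : ℕ => (A ^ t) *ᵥ e) atTop (𝓝 0)) ↔ SchurStable A := by
  rw [tendsto_mulVec_nhds_zero_iff, SchurStable, ← tendsto_pow_nhds_zero_iff_forall_norm_lt_one,
    ← tendsto_map_ofReal_nhds_zero_iff]
  have hpow (t : ℕ) : (A ^ t).map Complex.ofReal = A.map Complex.ofReal ^ t :=
    Matrix.map_pow A Complex.ofRealHom t
  simp only [hpow]

end Matrix

theorem jordanBlock_map_ofReal_isUpperTriangular (lam : ℝ) (d : ℕ) :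
    ((jordanBlock lam d).map Complex.ofReal).IsUpperTriangular := by
  intro i j hji
  have hji : (j : ℕ) < i := hji
  have hij : i ≠ j := by omega
  have hij' : (i : ℕ) + 1 ≠ j := by omega
  simp [jordanBlock, hij, hij']

theorem spectrum_kronecker_jordanBlock {n : Type*} [Fintype n] [DecidableEq n] (lam : ℝ)
    (d : ℕ) [NeZero d] (A : Matrix n n ℂ) :
    spectrum ℂ (A ⊗ₖ (jordanBlock lam d).map Complex.ofReal) = spectrum ℂ ((lam : ℂ) • A) := by
  rw [spectrum_kronecker_of_isUpperTriangular A (jordanBlock_map_ofReal_isUpperTriangular lam d)]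
  have : Nonempty (Fin d) := ⟨0⟩
  simpa [jordanBlock] using Set.iUnion_const _

theorem stmt11 (lam : ℝ) (hlam : 1 ≤ |lam|) (d : ℕ) (hd : 1 ≤ d)
    (N : ℕ) (hN : 1 ≤ N) (L : Matrix (Fin N) (Fin N) ℝ) (k : ℝ)
    (Φ : Matrix (Fin N × Fin d) (Fin N × Fin d) ℝ)
    (hΦ : Φ = ((1 : Matrix (Fin N) (Fin N) ℝ) - k • L) ⊗ₖ jordanBlock lam d) :
    (∀ e₀ : Fin N × Fin d → ℝ,
        Filter.Tendsto (fun t : ℕ => (Φ ^ t) *ᵥ e₀) Filter.atTop (nhds 0)) ↔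
      ∀ μ ∈ spectrum ℂ (L.map Complex.ofReal),
        ‖(1 - (k : ℂ) * μ)‖ < 1 / |lam| := by
  have : NeZero d := ⟨by omega⟩
  have : NeZero N := ⟨by omega⟩
  have hΦℂ : Φ.map Complex.ofReal =
      (1 - (k : ℂ) • L.map Complex.ofReal) ⊗ₖ (jordanBlock lam d).map Complex.ofReal := by
    ext ⟨i, a⟩ ⟨j, b⟩
    by_cases hij : i = j <;> simp [hΦ, one_apply, hij]
  rw [Matrix.tendsto_pow_mulVec_nhds_zero_iff_schurStable, SchurStable, hΦℂ,
    spectrum_kronecker_jordanBlock, spectrum.smul_eq_smul _ _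
      (spectrum.nonempty_of_isAlgClosed_of_finiteDimensional ℂ _),
    spectrum.one_sub_smul_eq_image, ← Set.image_smul, Set.image_image, Set.forall_mem_image]
  refine forall₂_congr fun μ _ => ?_
  rw [norm_smul, Complex.norm_real, Real.norm_eq_abs, lt_div_iff₀' (by linarith)]
end
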